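/- Let K be a field, let g and h be finite-dimensional Lie algebras over K, and let ρ: g → gl(h) and σ: h → gl(g) be representations. Define E = g* × h with bracket ⁅(φ1,Y1), (φ2,Y2)⁆_E = (σ*_{Y1}(φ2) − σ*_{Y2}(φ1), ⁅Y1,Y2⁆), where σ*_Y(φ) = −φ∘σ_Y, and define F = g × h* with bracket ⁅(X1,ψ1), (X2,ψ2)⁆_F = (⁅X2,X1⁆, ρ*_{X2}(ψ1) − ρ*_{X1}(ψ2)), where ρ*_X(ψ) = −ψ∘ρ_X. Then E and F are Lie algebras (the semidirect products g* ⋊ h and g^op ⋉ h*), the bilinear pairing ⟪(X,ψ), (φ,Y)⟫ = ψ(Y) − φ(X) between F and E is nondegenerate (so it identifies F with the dual space of E), and the following are equivalent: (i) the matched pair equations hold for (g, h, ρ, σ); (ii) (E, F) is a Lie bialgebra with respect to this pairing, i.e. for all e1, e2 ∈ E and f1, f2 ∈ F, ⟪⁅f1,f2⁆_F, ⁅e1,e2⁆_E⟫ = ⟪⁅f1·e1, f2⁆_F + ⁅f1, f2·e1⁆_F, e2⟫ − ⟪⁅f1·e2, f2⁆_F + ⁅f1, f2·e2⁆_F, e1⟫,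 where for f ∈ F and e ∈ E, f·e denotes the unique element of F with ⟪f·e, e'⟫ = ⟪f, ⁅e,e'⁆_E⟫ for all e' ∈ E. (This is the one-point-base case of the corollary that (g, h, ρ, σ) is a matched pair if and only if (A* ⋊ B, A^op ⋉ B*) is a Lie bialgebroid.) -/

import Mathlib

/-- A `K`-bilinear, alternating bracket on the `K`-vector space `V` satisfying the
Jacobi identity, i.e. a Lie algebra structure on `V` over `K`. -/
structure IsLieBracket (K V : Type*) [Field K] [AddCommGroup V] [Module K V]
    (br : V → V → V) : Prop where
  add_left : ∀ x y z, br (x + y) z = br x z + br y z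
  smul_left : ∀ (k : K) (x z : V), br (k • x) z = k • br x z
  add_right : ∀ x y z, br x (y + z) = br x y + br x z
  smul_right : ∀ (k : K) (x z : V), br x (k • z) = k • br x z
  alternate : ∀ x, br x x = 0
  jacobi : ∀ x y z, br (br x y) z + br (br y z) x + br (br z x) y = 0

attribute [local instance 100] LieRing.ofAssociativeRing

section

variable (K g h : Type*) [Field K]
  [LieRing g] [LieAlgebra K g] [LieRing h] [LieAlgebra K h]

/-- The semidirect product bracket on `E = g* ⋊ h`:
`⁅(φ₁,Y₁), (φ₂,Y₂)⁆ = (σ*_{Y₁} φ₂ − σ*_{Y₂} φ₁, ⁅Y₁,Y₂⁆)`, where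
`σ*_Y φ = −φ ∘ σ_Y` is the contragredient of `σ`. -/
def brE (σ : h →ₗ⁅K⁆ Module.End K g) :
    Module.Dual K g × h → Module.Dual K g × h → Module.Dual K g × h :=
  fun e₁ e₂ => ((-(e₂.1 ∘ₗ σ e₁.2)) - (-(e₁.1 ∘ₗ σ e₂.2)), ⁅e₁.2, e₂.2⁆)

/-- The semidirect product bracket on `F = g^op ⋉ h*`:
`⁅(X₁,ψ₁), (X₂,ψ₂)⁆ = (⁅X₂,X₁⁆, ρ*_{X₂} ψ₁ − ρ*_{X₁} ψ₂)`, where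
`ρ*_X ψ = −ψ ∘ ρ_X` is the contragredient of `ρ`. -/
def brF (ρ : g →ₗ⁅K⁆ Module.End K h) :
    g × Module.Dual K h → g × Module.Dual K h → g × Module.Dual K h :=
  fun f₁ f₂ => (⁅f₂.1, f₁.1⁆, (-(f₁.2 ∘ₗ ρ f₂.1)) - (-(f₂.2 ∘ₗ ρ f₁.1)))

/-- The pairing `⟪(X,ψ), (φ,Y)⟫ = ψ(Y) − φ(X)` between `F = g × h*` and `E = g* × h`. -/
def dblPair : g × Module.Dual K h → Module.Dual K g × h → K :=
  fun f e => f.2 e.2 - e.1 f.1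

end

/-!
`E` and `F` are semidirect products of a Lie algebra with an abelian one, `F` taken with the
opposite bracket, so both are Lie algebras. Nondegeneracy of the pairing forces `f · e` to be the
explicit coadjoint action. With it, the two sides of the cocycle condition for
`e = (φ, Y)`, `f = (X, ψ)` differ by
`ψ₂ (D_ρ X₁ Y₁ Y₂) - ψ₁ (D_ρ X₂ Y₁ Y₂) + φ₂ (D_σ Y₁ X₂ X₁) - φ₁ (D_σ Y₂ X₂ X₁)`,
where `D_ρ`, `D_σ` are the defects of the two matched pair equations; choosing all but one of
`φᵢ, ψᵢ` to be zero isolates each defect.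
-/

section LieBracket

variable {K V W : Type*} [Field K] [AddCommGroup V] [Module K V] [AddCommGroup W] [Module K W]
  {br : V → V → V}

theorem IsLieBracket.anticomm (hbr : IsLieBracket K V br) (x y : V) : br y x = -br x y := by
  have h := hbr.alternate (x + y)
  rw [hbr.add_left, hbr.add_right, hbr.add_right, hbr.alternate, hbr.alternate, zero_add,
    add_zero] at h
  exact eq_neg_of_add_eq_zero_right h

theorem IsLieBracket.neg_left (hbr : IsLieBracket K V br) (x y : V) : br (-x) y = -br x y := by
  rw [← neg_one_smul K x, hbr.smul_left, neg_one_smul]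

theorem IsLieBracket.flip (hbr : IsLieBracket K V br) : IsLieBracket K V (flip br) where
  add_left x y z := hbr.add_right z x y
  smul_left k x z := hbr.smul_right k z x
  add_right x y z := hbr.add_left y z x
  smul_right k x z := hbr.smul_left k z x
  alternate := hbr.alternate
  jacobi x y z := by
    simp only [Function.flip_def]
    rw [hbr.anticomm (br y x) z, hbr.anticomm x y, hbr.anticomm (br z y) x, hbr.anticomm y z,
      hbr.anticomm (br x z) y, hbr.anticomm z x]
    simpa only [hbr.neg_left, neg_neg] using hbr.jacobi x y z

theorem IsLieBracket.comap {br : W → W → W} (hbr : IsLieBracket K W br) (e : V ≃ₗ[K] W) :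
    IsLieBracket K V fun x y => e.symm (br (e x) (e y)) where
  add_left x y z := by simp only [map_add, hbr.add_left]
  smul_left k x z := by simp only [map_smul, hbr.smul_left]
  add_right x y z := by simp only [map_add, hbr.add_right]
  smul_right k x z := by simp only [map_smul, hbr.smul_right]
  alternate x := by simp only [hbr.alternate, map_zero]
  jacobi x y z := by simp only [LinearEquiv.apply_symm_apply, ← map_add, hbr.jacobi, map_zero]

end LieBracket

section Semidirect

variable {K L M : Type*} [Field K] [LieRing L] [LieAlgebra K L] [AddCommGroup M] [Module K M]

def semidirectBracket (τ : L →ₗ⁅K⁆ Module.End K M) (a b : M × L) : M × L :=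
  (τ a.2 b.1 - τ b.2 a.1, ⁅a.2, b.2⁆)

theorem isLieBracket_semidirectBracket (τ : L →ₗ⁅K⁆ Module.End K M) :
    IsLieBracket K (M × L) (semidirectBracket τ) where
  add_left x y z := by
    ext <;> simp only [semidirectBracket, Prod.fst_add, Prod.snd_add, map_add,
      LinearMap.add_apply, add_lie]
    abel
  smul_left k x z := by ext <;> simp [semidirectBracket, smul_sub]
  add_right x y z := by
    ext <;> simp only [semidirectBracket, Prod.fst_add, Prod.snd_add, map_add,
      LinearMap.add_apply, lie_add]
    abel
  smul_right k x z := by ext <;> simp [semidirectBracket, smul_sub]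
  alternate x := by ext <;> simp [semidirectBracket]
  jacobi x y z := by
    ext
    · simp only [semidirectBracket, Prod.fst_add, Prod.fst_zero, LieHom.map_lie, Ring.lie_def,
        LinearMap.sub_apply, Module.End.mul_apply, map_sub]
      abel
    · simp only [semidirectBracket, Prod.snd_add, Prod.snd_zero]
      rw [← lie_skew, ← lie_skew ⁅y.2, z.2⁆, ← lie_skew ⁅z.2, x.2⁆, ← neg_add, ← neg_add,
        neg_eq_zero, add_rotate]
      exact lie_jacobi x.2 y.2 z.2

def LieHom.contragredient (τ : L →ₗ⁅K⁆ Module.End K M) :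
    L →ₗ⁅K⁆ Module.End K (Module.Dual K M) where
  toFun x := -(τ x).dualMap
  map_add' x y := by ext; simp [add_comm]
  map_smul' k x := by ext; simp
  map_lie' {x y} := by ext; simp [Ring.lie_def, Module.End.mul_apply]

end Semidirect

section MatchedPair

variable {K g h : Type*} [Field K] [LieRing g] [LieAlgebra K g] [LieRing h] [LieAlgebra K h]

theorem isLieBracket_brE (σ : h →ₗ⁅K⁆ Module.End K g) :
    IsLieBracket K (Module.Dual K g × h) (brE K g h σ) :=
  isLieBracket_semidirectBracket σ.contragredient

theorem isLieBracket_brF (ρ : g →ₗ⁅K⁆ Module.End K h) :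
    IsLieBracket K (g × Module.Dual K h) (brF K g h ρ) :=
  ((isLieBracket_semidirectBracket ρ.contragredient).comap
    (LinearEquiv.prodComm K g (Module.Dual K h))).flip

theorem dblPair_sub_left (f f' : g × Module.Dual K h) (e : Module.Dual K g × h) :
    dblPair K g h (f - f') e = dblPair K g h f e - dblPair K g h f' e := by
  simp only [dblPair, Prod.fst_sub, Prod.snd_sub, LinearMap.sub_apply, map_sub]
  ring

theorem dblPair_separatingLeft (f : g × Module.Dual K h) (hf : ∀ e, dblPair K g h f e = 0) :
    f = 0 := by
  refine Prod.ext ?_ (LinearMap.ext fun Y => by simpa [dblPair] using hf (0, Y))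
  exact (Module.forall_dual_apply_eq_zero_iff K f.1).mp fun φ => by
    simpa [dblPair] using hf (φ, 0)

theorem dblPair_separatingRight (e : Module.Dual K g × h) (he : ∀ f, dblPair K g h f e = 0) :
    e = 0 := by
  refine Prod.ext (LinearMap.ext fun X => by simpa [dblPair] using he (X, 0)) ?_
  exact (Module.forall_dual_apply_eq_zero_iff K e.2).mp fun ψ => by
    simpa [dblPair] using he (0, ψ)

/-- The action `f · e` of `E` on `F = E*` dual to the adjoint action of `E`. -/
def coadjointDot (σ : h →ₗ⁅K⁆ Module.End K g) (f : g × Module.Dual K h)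
    (e : Module.Dual K g × h) : g × Module.Dual K h :=
  (-σ e.2 f.1, f.2 ∘ₗ LieAlgebra.ad K h e.2 - e.1 ∘ₗ σ.toLinearMap.flip f.1)

theorem dblPair_coadjointDot (σ : h →ₗ⁅K⁆ Module.End K g) (f : g × Module.Dual K h)
    (e e' : Module.Dual K g × h) :
    dblPair K g h (coadjointDot σ f e) e' = dblPair K g h f (brE K g h σ e e') := by
  simp only [dblPair, coadjointDot, brE, LinearMap.sub_apply, LinearMap.neg_apply,
    LinearMap.comp_apply, LinearMap.flip_apply, LieHom.coe_toLinearMap, LieAlgebra.ad_apply,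
    map_neg]
  ring

theorem eq_coadjointDot_of_dblPair (σ : h →ₗ⁅K⁆ Module.End K g)
    {dot : g × Module.Dual K h → Module.Dual K g × h → g × Module.Dual K h}
    (hdot : ∀ f e e', dblPair K g h (dot f e) e' = dblPair K g h f (brE K g h σ e e')) :
    dot = coadjointDot σ :=
  funext₂ fun f e => sub_eq_zero.mp <| dblPair_separatingLeft _ fun e' => by
    rw [dblPair_sub_left, hdot, dblPair_coadjointDot, sub_self]

/-- The matched pair equation for `σ` is the vanishing of `matchedPairDefect σ ρ`. -/
def matchedPairDefect (ρ : g →ₗ⁅K⁆ Module.End K h) (σ : h →ₗ⁅K⁆ Module.End K g) (X : g)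
    (Y₁ Y₂ : h) : h :=
  ρ X ⁅Y₁, Y₂⁆ - (⁅ρ X Y₁, Y₂⁆ + ⁅Y₁, ρ X Y₂⁆ + ρ (σ Y₂ X) Y₁ - ρ (σ Y₁ X) Y₂)

def cocycleDefect (ρ : g →ₗ⁅K⁆ Module.End K h) (σ : h →ₗ⁅K⁆ Module.End K g)
    (dot : g × Module.Dual K h → Module.Dual K g × h → g × Module.Dual K h)
    (e₁ e₂ : Module.Dual K g × h) (f₁ f₂ : g × Module.Dual K h) : K :=
  dblPair K g h (brF K g h ρ f₁ f₂) (brE K g h σ e₁ e₂) -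
    (dblPair K g h (brF K g h ρ (dot f₁ e₁) f₂ + brF K g h ρ f₁ (dot f₂ e₁)) e₂
      - dblPair K g h (brF K g h ρ (dot f₁ e₂) f₂ + brF K g h ρ f₁ (dot f₂ e₂)) e₁)

theorem cocycleDefect_coadjointDot (ρ : g →ₗ⁅K⁆ Module.End K h) (σ : h →ₗ⁅K⁆ Module.End K g)
    (e₁ e₂ : Module.Dual K g × h) (f₁ f₂ : g × Module.Dual K h) :
    cocycleDefect ρ σ (coadjointDot σ) e₁ e₂ f₁ f₂ =
      f₂.2 (matchedPairDefect ρ σ f₁.1 e₁.2 e₂.2) - f₁.2 (matchedPairDefect ρ σ f₂.1 e₁.2 e₂.2)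
        + e₂.1 (matchedPairDefect σ ρ e₁.2 f₂.1 f₁.1)
        - e₁.1 (matchedPairDefect σ ρ e₂.2 f₂.1 f₁.1) := by
  have skew₁ : f₂.2 ⁅e₂.2, ρ f₁.1 e₁.2⁆ = -f₂.2 ⁅ρ f₁.1 e₁.2, e₂.2⁆ := by
    rw [← lie_skew, map_neg]
  have skew₂ : f₁.2 ⁅e₂.2, ρ f₂.1 e₁.2⁆ = -f₁.2 ⁅ρ f₂.1 e₁.2, e₂.2⁆ := by
    rw [← lie_skew, map_neg]
  simp only [cocycleDefect, matchedPairDefect, brE, brF, dblPair, coadjointDot, Prod.fst_add,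
    Prod.snd_add, LinearMap.add_apply, LinearMap.sub_apply, LinearMap.neg_apply,
    LinearMap.comp_apply, LinearMap.flip_apply, LieHom.coe_toLinearMap, LieAlgebra.ad_apply,
    map_add, map_sub, map_neg, lie_neg, neg_lie]
  linear_combination skew₁ - skew₂

theorem forall_matchedPairDefect_eq_zero_iff (ρ : g →ₗ⁅K⁆ Module.End K h)
    (σ : h →ₗ⁅K⁆ Module.End K g) :
    ((∀ X Y₁ Y₂, matchedPairDefect ρ σ X Y₁ Y₂ = 0) ∧
        ∀ Y X₁ X₂, matchedPairDefect σ ρ Y X₁ X₂ = 0) ↔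
      ∀ e₁ e₂ f₁ f₂, cocycleDefect ρ σ (coadjointDot σ) e₁ e₂ f₁ f₂ = 0 := by
  refine ⟨fun ⟨hρ, hσ⟩ e₁ e₂ f₁ f₂ => by simp [cocycleDefect_coadjointDot, hρ, hσ], ?_⟩
  intro hc
  constructor
  · intro X Y₁ Y₂
    refine (Module.forall_dual_apply_eq_zero_iff K _).mp fun ψ => ?_
    simpa [cocycleDefect_coadjointDot] using hc (0, Y₁) (0, Y₂) (X, 0) (0, ψ)
  · intro Y X₁ X₂
    refine (Module.forall_dual_apply_eq_zero_iff K _).mp fun φ => ?_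
    simpa [cocycleDefect_coadjointDot] using hc (0, Y) (φ, 0) (X₂, 0) (X₁, 0)

end MatchedPair

theorem matchedPair_iff_semidirect_lieBialgebra_general
    (K g h : Type*) [Field K]
    [LieRing g] [LieAlgebra K g]
    [LieRing h] [LieAlgebra K h]
    (ρ : g →ₗ⁅K⁆ Module.End K h) (σ : h →ₗ⁅K⁆ Module.End K g)
    (dot : g × Module.Dual K h → Module.Dual K g × h → g × Module.Dual K h)
    (hdot : ∀ f e e', dblPair K g h (dot f e) e' = dblPair K g h f (brE K g h σ e e')) :
    IsLieBracket K (Module.Dual K g × h) (brE K g h σ)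
    ∧ IsLieBracket K (g × Module.Dual K h) (brF K g h ρ)
    ∧ (∀ f, (∀ e, dblPair K g h f e = 0) → f = 0)
    ∧ (∀ e, (∀ f, dblPair K g h f e = 0) → e = 0)
    ∧ (((∀ (X : g) (Y₁ Y₂ : h), ρ X ⁅Y₁, Y₂⁆ =
          ⁅ρ X Y₁, Y₂⁆ + ⁅Y₁, ρ X Y₂⁆ + ρ (σ Y₂ X) Y₁ - ρ (σ Y₁ X) Y₂)
        ∧ (∀ (Y : h) (X₁ X₂ : g), σ Y ⁅X₁, X₂⁆ =
          ⁅σ Y X₁, X₂⁆ + ⁅X₁, σ Y X₂⁆ + σ (ρ X₂ Y) X₁ - σ (ρ X₁ Y) X₂))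
      ↔ (∀ e₁ e₂ f₁ f₂,
          dblPair K g h (brF K g h ρ f₁ f₂) (brE K g h σ e₁ e₂) =
            dblPair K g h
              (brF K g h ρ (dot f₁ e₁) f₂ + brF K g h ρ f₁ (dot f₂ e₁)) e₂
            - dblPair K g h
              (brF K g h ρ (dot f₁ e₂) f₂ + brF K g h ρ f₁ (dot f₂ e₂)) e₁)) := by
  obtain rfl := eq_coadjointDot_of_dblPair σ hdot
  refine ⟨isLieBracket_brE σ, isLieBracket_brF ρ, dblPair_separatingLeft,
    dblPair_separatingRight, ?_⟩
  simpa only [matchedPairDefect, cocycleDefect, sub_eq_zero] using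
    forall_matchedPairDefect_eq_zero_iff ρ σ

/-- **Matched pairs of Lie algebras correspond to semidirect-product Lie bialgebras**
(the one-point-base case of: `(A, B, ρ, σ)` is a matched pair iff
`(A* ⋊ B, A^op ⋉ B*)` is a Lie bialgebroid). Let `ρ : g → gl(h)` and `σ : h → gl(g)`
be representations of finite-dimensional Lie algebras on each other's underlying
vector spaces. Then `E = g* ⋊ h` and `F = g^op ⋉ h*` are Lie algebras, the pairing
`⟪(X,ψ), (φ,Y)⟫ = ψ(Y) − φ(X)` between `F` and `E` is nondegenerate, and the matched
pair equations hold for `(g, h, ρ, σ)` if and only if `(E, F)` is a Lie bialgebra with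
respect to this pairing, i.e. the cocycle condition holds, where for `f ∈ F` and
`e ∈ E`, `f·e` denotes the (unique) element of `F` with `⟪f·e, e'⟫ = ⟪f, ⁅e,e'⁆_E⟫`
for all `e' ∈ E`. -/
theorem matchedPair_iff_semidirect_lieBialgebra
    (K g h : Type*) [Field K]
    [LieRing g] [LieAlgebra K g] [FiniteDimensional K g]
    [LieRing h] [LieAlgebra K h] [FiniteDimensional K h]
    (ρ : g →ₗ⁅K⁆ Module.End K h) (σ : h →ₗ⁅K⁆ Module.End K g)
    (dot : g × Module.Dual K h → Module.Dual K g × h → g × Module.Dual K h)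
    (hdot : ∀ f e e', dblPair K g h (dot f e) e' = dblPair K g h f (brE K g h σ e e')) :
    IsLieBracket K (Module.Dual K g × h) (brE K g h σ)
    ∧ IsLieBracket K (g × Module.Dual K h) (brF K g h ρ)
    ∧ (∀ f, (∀ e, dblPair K g h f e = 0) → f = 0)
    ∧ (∀ e, (∀ f, dblPair K g h f e = 0) → e = 0)
    ∧ (((∀ (X : g) (Y₁ Y₂ : h), ρ X ⁅Y₁, Y₂⁆ =
          ⁅ρ X Y₁, Y₂⁆ + ⁅Y₁, ρ X Y₂⁆ + ρ (σ Y₂ X) Y₁ - ρ (σ Y₁ X) Y₂)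
        ∧ (∀ (Y : h) (X₁ X₂ : g), σ Y ⁅X₁, X₂⁆ =
          ⁅σ Y X₁, X₂⁆ + ⁅X₁, σ Y X₂⁆ + σ (ρ X₂ Y) X₁ - σ (ρ X₁ Y) X₂))
      ↔ (∀ e₁ e₂ f₁ f₂,
          dblPair K g h (brF K g h ρ f₁ f₂) (brE K g h σ e₁ e₂) =
            dblPair K g h
              (brF K g h ρ (dot f₁ e₁) f₂ + brF K g h ρ f₁ (dot f₂ e₁)) e₂
            - dblPair K g h
              (brF K g h ρ (dot f₁ e₂) f₂ + brF K g h ρ f₁ (dot f₂ e₂)) e₁)) :=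
  matchedPair_iff_semidirect_lieBialgebra_general K g h ρ σ dot hdot
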